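/- arXiv:2205.05520 — 3 statements merged into one kernel-verified Lean document; each statement's English description precedes it below -/
import Mathlib

section
/- Let g and h be distinct one-dimensional subspaces of a complex Hilbert space H, with orthogonal projections P_g and P_h. If A is a positive bounded operator with A ≤ P_g and A ≤ P_h (in the Loewner order), then A = 0. -/
open scoped InnerProductSpace

lemma pos_apply_eq_zero' {H : Type*} [NormedAddCommGroup H] [InnerProductSpace ℂ H]
    [CompleteSpace H] {A : H →L[ℂ] H} (hA : A.IsPositive) {y : H}
    (hy : Complex.re ⟪A y, y⟫_ℂ = 0) : A y = 0 := by
  have hsym : (A : H →ₗ[ℂ] H).IsSymmetric :=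
    (ContinuousLinearMap.isSelfAdjoint_iff_isSymmetric).mp hA.isSelfAdjoint
  have key : ∀ z : H, Complex.re ⟪A y, z⟫_ℂ = 0 := by
    intro z
    set a := Complex.re ⟪A y, z⟫_ℂ with ha
    set b := Complex.re ⟪A z, z⟫_ℂ with hb
    have hb0 : 0 ≤ b := hA.re_inner_nonneg_left z
    have hq : ∀ t : ℝ, 0 ≤ 2 * t * a + t ^ 2 * b := by
      intro t
      have h0 := hA.re_inner_nonneg_left (y + (t : ℂ) • z)
      have hexp : ⟪A (y + (t : ℂ) • z), y + (t : ℂ) • z⟫_ℂ =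
          ⟪A y, y⟫_ℂ + (t : ℂ) * ⟪A y, z⟫_ℂ + (t : ℂ) * ⟪A z, y⟫_ℂ
            + (t : ℂ) * (t : ℂ) * ⟪A z, z⟫_ℂ := by
        simp only [map_add, map_smul, inner_add_left, inner_add_right, inner_smul_left,
          inner_smul_right, Complex.conj_ofReal]
        ring
      have hre : Complex.re ⟪A z, y⟫_ℂ = a := by
        have h := hsym z y
        simp only [ContinuousLinearMap.coe_coe] at h
        rw [h, ← inner_conj_symm, Complex.conj_re]
      rw [hexp] at h0
      simp only [RCLike.re_to_complex, Complex.add_re, Complex.mul_re, Complex.mul_im,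
        Complex.ofReal_re, Complex.ofReal_im, zero_mul, mul_zero, sub_zero, add_zero,
        zero_add] at h0
      rw [hre] at h0
      nlinarith [h0, hy]
    have h1 : (0:ℝ) < b + 1 := by linarith
    have ht := hq (-a / (b + 1))
    have e : 2 * (-a / (b + 1)) * a + (-a / (b + 1)) ^ 2 * b
        = (-(a ^ 2) * (b + 2)) / (b + 1) ^ 2 := by
      field_simp
      ring
    rw [e] at ht
    have h3 : 0 ≤ -(a ^ 2) * (b + 2) := by
      have h4 := mul_nonneg ht (sq_nonneg (b + 1))
      rwa [div_mul_cancel₀] at h4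
      positivity
    have ha2 : a ^ 2 = 0 := by nlinarith [sq_nonneg a]
    exact pow_eq_zero_iff (by norm_num) |>.mp ha2
  have := key (A y)
  have : ‖A y‖ ^ 2 = 0 := by
    rw [← inner_self_eq_norm_sq (𝕜 := ℂ)]; exact this
  simpa [pow_eq_zero_iff] using this

/-- A positive operator below (in the Loewner order) the projections onto two
distinct lines is zero. -/
theorem stmt_2 {H : Type*} [NormedAddCommGroup H] [InnerProductSpace ℂ H]
    [CompleteSpace H] (φ χ : H) (hφ : ‖φ‖ = 1) (hχ : ‖χ‖ = 1)
    (hne : ∀ c : ℂ, χ ≠ c • φ)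
    (P Q A : H →L[ℂ] H)
    (hP : ∀ x, P x = ⟪φ, x⟫_ℂ • φ)
    (hQ : ∀ x, Q x = ⟪χ, x⟫_ℂ • χ)
    (hA : A.IsPositive)
    (hAP : (P - A).IsPositive)
    (hAQ : (Q - A).IsPositive) :
    A = 0 := by
  have hsym : (A : H →ₗ[ℂ] H).IsSymmetric :=
    (ContinuousLinearMap.isSelfAdjoint_iff_isSymmetric).mp hA.isSelfAdjoint
  -- A vanishes on vectors orthogonal to φ (resp. χ)
  have hker : ∀ (v : H) (B : H →L[ℂ] H), (∀ x, B x = ⟪v, x⟫_ℂ • v) →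
      (B - A).IsPositive → ∀ y : H, ⟪v, y⟫_ℂ = 0 → A y = 0 := by
    intro v B hB hBA y hy
    apply pos_apply_eq_zero' hA
    have h1 : 0 ≤ Complex.re ⟪(B - A) y, y⟫_ℂ := hBA.re_inner_nonneg_left y
    have h2 : 0 ≤ Complex.re ⟪A y, y⟫_ℂ := hA.re_inner_nonneg_left y
    have h3 : ⟪B y, y⟫_ℂ = 0 := by
      rw [hB y, hy]; simp
    rw [ContinuousLinearMap.sub_apply, inner_sub_left, Complex.sub_re, h3] at h1
    simp at h1
    linarith
  have hkφ := hker φ P hP hAP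
  have hkχ := hker χ Q hQ hAQ
  -- range of A is contained in ℂ•v for v ∈ {φ, χ}
  have hrange : ∀ (v : H), ‖v‖ = 1 → (∀ y : H, ⟪v, y⟫_ℂ = 0 → A y = 0) →
      ∀ x : H, A x = ⟪v, A x⟫_ℂ • v := by
    intro v hv hk x
    set u := A x with hu
    set y := u - ⟪v, u⟫_ℂ • v with hyd
    have hvv : ⟪v, v⟫_ℂ = 1 := by
      rw [inner_self_eq_norm_sq_to_K, hv]; norm_num
    have hyv : ⟪v, y⟫_ℂ = 0 := by
      rw [hyd, inner_sub_right, inner_smul_right, hvv]; ring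
    have hAy : A y = 0 := hk y hyv
    have hyu : ⟪y, u⟫_ℂ = 0 := by
      have h := hsym y x
      simp only [ContinuousLinearMap.coe_coe] at h
      rw [hAy] at h
      simpa [hu] using h.symm
    have hyy : ⟪y, y⟫_ℂ = 0 := by
      have hyv2 : ⟪y, v⟫_ℂ = 0 := by
        rw [← inner_conj_symm, hyv, map_zero]
      calc ⟪y, y⟫_ℂ = ⟪y, u⟫_ℂ - ⟪v, u⟫_ℂ * ⟪y, v⟫_ℂ := by
            rw [hyd]; rw [inner_sub_right, inner_smul_right]
        _ = 0 := by rw [hyu, hyv2]; ring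
    have hy0 : y = 0 := inner_self_eq_zero.mp hyy
    have : u - ⟪v, u⟫_ℂ • v = 0 := by rw [← hyd, hy0]
    exact sub_eq_zero.mp this
  have hφr := hrange φ hφ hkφ
  have hχr := hrange χ hχ hkχ
  ext x
  simp only [ContinuousLinearMap.zero_apply]
  by_cases hc : ⟪χ, A x⟫_ℂ = 0
  · rw [hχr x, hc, zero_smul]
  · exfalso
    apply hne ((⟪χ, A x⟫_ℂ)⁻¹ * ⟪φ, A x⟫_ℂ)
    have h := (hχr x).symm.trans (hφr x)
    calc χ = (⟪χ, A x⟫_ℂ)⁻¹ • (⟪χ, A x⟫_ℂ • χ) := by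
          rw [smul_smul, inv_mul_cancel₀ hc, one_smul]
      _ = (⟪χ, A x⟫_ℂ)⁻¹ • (⟪φ, A x⟫_ℂ • φ) := by rw [h]
      _ = ((⟪χ, A x⟫_ℂ)⁻¹ * ⟪φ, A x⟫_ℂ) • φ := by rw [smul_smul]
end

section
/- Let H be a complex Hilbert space with dim H ≥ 2, (Λ, L) a measurable space, and for each unit vector ψ ∈ H let ρ^ψ be a probability measure on (Λ, L). Then there is no POVM G on (Λ, L) acting on H such that ρ^ψ(A) = ⟨ψ, G(A)ψ⟩ for all A ∈ L and all unit vectors ψ, provided that additionally for every one-dimensional subspace g there exists a measurable function p_g : Λ → [0,1] with ∫_Λ p_g(λ) G(dλ) = P_g (weakly). In other words: there is no POVM G such that each effect P_g arises as a G-integral of a [0,1]-valued function AND G reproduces probability measures ρ^ψ. (Theorem 2 of the paper.) -/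
open scoped InnerProductSpace
open MeasureTheory

section Aux

variable {H : Type*} [NormedAddCommGroup H] [InnerProductSpace ℂ H]

/-- A self-adjoint operator with nonnegative quadratic form that vanishes at `y` kills `y`. -/
lemma aux_pos_apply_eq_zero [CompleteSpace H] {T : H →L[ℂ] H} (hsa : IsSelfAdjoint T)
    (hpos : ∀ x : H, 0 ≤ (⟪x, T x⟫_ℂ).re)
    {y : H} (hy : (⟪y, T y⟫_ℂ).re = 0) : T y = 0 := by
  have key : ∀ x : H, (⟪x, T y⟫_ℂ).re = 0 := by
    intro x
    set a := (⟪x, T x⟫_ℂ).re with ha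
    set b := 2 * (⟪x, T y⟫_ℂ).re with hb
    have hsymm : (⟪y, T x⟫_ℂ).re = (⟪x, T y⟫_ℂ).re := by
      have hs := hsa.isSymmetric x y
      simp only [ContinuousLinearMap.coe_coe] at hs
      have hcj : ⟪y, T x⟫_ℂ = (starRingEnd ℂ) ⟪T x, y⟫_ℂ := (inner_conj_symm _ _).symm
      rw [← hs, hcj, Complex.conj_re]
    have hquad : ∀ t : ℝ, 0 ≤ a * t ^ 2 + b * t := by
      intro t
      have h0 := hpos (y + (t : ℂ) • x)
      have hexp : (⟪y + (t:ℂ) • x, T (y + (t:ℂ) • x)⟫_ℂ).re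
          = (⟪y, T y⟫_ℂ).re + t * (⟪y, T x⟫_ℂ).re + t * (⟪x, T y⟫_ℂ).re
            + t^2 * (⟪x, T x⟫_ℂ).re := by
        simp only [map_add, _root_.map_smul, inner_add_left, inner_add_right,
          inner_smul_left, inner_smul_right, Complex.add_re, Complex.mul_re,
          Complex.conj_re, Complex.conj_im, Complex.ofReal_re, Complex.ofReal_im]
        ring
      rw [hexp, hy, hsymm] at h0
      rw [ha, hb]
      linarith [h0]
    have ha0 : 0 ≤ a := hpos x
    have hc : (0:ℝ) < a + 1 := by linarith
    set c := (a + 1)⁻¹ with hcdef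
    have hc0 : 0 < c := inv_pos.mpr hc
    have hc1 : c * (a + 1) = 1 := inv_mul_cancel₀ hc.ne'
    have ht := hquad (-(b * c))
    have heq : a * (-(b * c)) ^ 2 + b * (-(b * c)) = -(b * c)^2 := by
      linear_combination (b ^ 2 * c) * hc1
    rw [heq] at ht
    have hbc : b * c = 0 := by nlinarith [sq_nonneg (b * c)]
    have hb0 : b = 0 := by
      rcases mul_eq_zero.mp hbc with h | h
      · exact h
      · exact absurd h hc0.ne'
    have : 2 * (⟪x, T y⟫_ℂ).re = 0 := by rw [← hb]; exact hb0
    linarith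
  have key2 : ∀ x : H, ⟪x, T y⟫_ℂ = 0 := by
    intro x
    have h1 := key x
    have h2 := key ((Complex.I : ℂ) • x)
    rw [inner_smul_left] at h2
    simp only [Complex.conj_I, Complex.mul_re, Complex.neg_re, Complex.I_re,
      Complex.neg_im, Complex.I_im] at h2
    apply Complex.ext
    · exact h1
    · simpa using h2
  have := key2 (T y)
  rwa [inner_self_eq_zero] at this

lemma aux_norm_one {x : H} (h : ⟪x, x⟫_ℂ = 1) : ‖x‖ = 1 := by
  have h2 := inner_self_eq_norm_sq (𝕜 := ℂ) (E := H) x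
  rw [h, RCLike.one_re] at h2
  have h3 : (‖x‖ : ℝ)^2 = 1 := h2.symm
  have h4 : (‖x‖ - 1) * (‖x‖ + 1) = 0 := by linear_combination h3
  rcases mul_eq_zero.mp h4 with h5 | h5
  · linarith
  · have := norm_nonneg x
    linarith

end Aux

section AuxMeasure

lemma aux_integrable {Λ : Type*} [MeasurableSpace Λ] (μ : Measure Λ)
    [IsProbabilityMeasure μ] {p : Λ → ℝ} (hm : Measurable p)
    (hp : ∀ l, p l ∈ Set.Icc (0:ℝ) 1) : Integrable p μ := by
  refine (integrable_const (1:ℝ)).mono' hm.aestronglyMeasurable ?_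
  refine Filter.Eventually.of_forall fun l => ?_
  rw [Real.norm_eq_abs, abs_of_nonneg (hp l).1]
  exact (hp l).2

lemma aux_meas_one {Λ : Type*} [MeasurableSpace Λ] (μ : Measure Λ)
    [IsProbabilityMeasure μ] {p : Λ → ℝ} (hm : Measurable p)
    (hp : ∀ l, p l ∈ Set.Icc (0:ℝ) 1) (h : ∫ l, p l ∂μ = 1) :
    μ {l | p l = 1}ᶜ = 0 := by
  have hint : Integrable p μ := aux_integrable μ hm hp
  have hq : Integrable (fun l => 1 - p l) μ := (integrable_const (1:ℝ)).sub hint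
  have hq0 : ∫ l, (1 - p l) ∂μ = 0 := by
    rw [integral_sub (integrable_const 1) hint, h]
    simp
  have := (integral_eq_zero_iff_of_nonneg (fun l => by simp [(hp l).2]) hq).mp hq0
  have hae : ∀ᵐ l ∂μ, p l = 1 := by
    filter_upwards [this] with l hl
    have : 1 - p l = 0 := hl
    linarith
  exact mem_ae_iff.mp hae

lemma aux_meas_zero {Λ : Type*} [MeasurableSpace Λ] (μ : Measure Λ)
    [IsProbabilityMeasure μ] {p : Λ → ℝ} (hm : Measurable p)
    (hp : ∀ l, p l ∈ Set.Icc (0:ℝ) 1) (h : ∫ l, p l ∂μ = 0) :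
    μ {l | p l = 1} = 0 := by
  have hint : Integrable p μ := aux_integrable μ hm hp
  have := (integral_eq_zero_iff_of_nonneg (fun l => (hp l).1) hint).mp h
  have hae : μ {l | ¬ p l = 0} = 0 := by exact ae_iff.mp this
  refine measure_mono_null ?_ hae
  intro l hl
  simp only [Set.mem_setOf_eq] at *
  rw [hl]; norm_num

end AuxMeasure

section AuxPOVM

variable {Λ : Type*} [MeasurableSpace Λ] {H : Type*} [NormedAddCommGroup H]
    [InnerProductSpace ℂ H] [CompleteSpace H]

omit [CompleteSpace H] in
lemma aux_empty_form (G : Set Λ → (H →L[ℂ] H))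
    (hadd : ∀ f : ℕ → Set Λ, (∀ n, MeasurableSet (f n)) →
      (Pairwise fun m n => Disjoint (f m) (f n)) →
      ∀ ψ : H, HasSum (fun n => ⟪ψ, G (f n) ψ⟫_ℂ) ⟪ψ, G (⋃ n, f n) ψ⟫_ℂ)
    (ψ : H) : ⟪ψ, G ∅ ψ⟫_ℂ = 0 := by
  have h := hadd (fun _ => ∅) (fun _ => MeasurableSet.empty)
    (fun m n _ => disjoint_bot_left) ψ
  simp only [Set.iUnion_empty] at h
  exact (summable_const_iff _).mp h.summable

omit [CompleteSpace H] in
lemma aux_pair_form (G : Set Λ → (H →L[ℂ] H))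
    (hadd : ∀ f : ℕ → Set Λ, (∀ n, MeasurableSet (f n)) →
      (Pairwise fun m n => Disjoint (f m) (f n)) →
      ∀ ψ : H, HasSum (fun n => ⟪ψ, G (f n) ψ⟫_ℂ) ⟪ψ, G (⋃ n, f n) ψ⟫_ℂ)
    {A B : Set Λ} (hA : MeasurableSet A) (hB : MeasurableSet B)
    (hAB : Disjoint A B) (ψ : H) :
    ⟪ψ, G (A ∪ B) ψ⟫_ℂ = ⟪ψ, G A ψ⟫_ℂ + ⟪ψ, G B ψ⟫_ℂ := by
  classical
  set f : ℕ → Set Λ := fun n => if n = 0 then A else if n = 1 then B else ∅ with hf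
  have hmeas : ∀ n, MeasurableSet (f n) := by
    intro n
    by_cases h0 : n = 0
    · simpa [hf, h0] using hA
    · by_cases h1 : n = 1
      · simpa [hf, h0, h1] using hB
      · simp [hf, h0, h1]
  have hdisj : Pairwise fun m n => Disjoint (f m) (f n) := by
    intro m n hmn
    rcases Nat.eq_zero_or_pos m with hm0 | hm
    · subst hm0
      by_cases hn1 : n = 1
      · simpa [hf, hn1] using hAB
      · have : n ≠ 0 := fun h => hmn h.symm
        simp [hf, this, hn1]
    · rcases Nat.eq_or_lt_of_le hm with hm1 | hm2
      · by_cases hn0 : n = 0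
        · simp only [hf, ← hm1, hn0]
          simpa using hAB.symm
        · have hn1 : n ≠ 1 := by omega
          simp [hf, hn0, hn1]
      · have hm0' : m ≠ 0 := by omega
        have hm1' : m ≠ 1 := by omega
        simp [hf, hm0', hm1']
  have hU : (⋃ n, f n) = A ∪ B := by
    apply Set.Subset.antisymm
    · refine Set.iUnion_subset fun n => ?_
      by_cases h0 : n = 0
      · simp [hf, h0]
      · by_cases h1 : n = 1
        · simp [hf, h0, h1]
        · simp [hf, h0, h1]
    · refine Set.union_subset ?_ ?_
      · have : A = f 0 := by simp [hf]
        rw [this]; exact Set.subset_iUnion f 0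
      · have : B = f 1 := by simp [hf]
        rw [this]; exact Set.subset_iUnion f 1
  have h := hadd f hmeas hdisj ψ
  rw [hU] at h
  have h2 : HasSum (fun n => ⟪ψ, G (f n) ψ⟫_ℂ) (⟪ψ, G A ψ⟫_ℂ + ⟪ψ, G B ψ⟫_ℂ) := by
    have hs : (⟪ψ, G A ψ⟫_ℂ + ⟪ψ, G B ψ⟫_ℂ)
        = ∑ n ∈ ({0, 1} : Finset ℕ), ⟪ψ, G (f n) ψ⟫_ℂ := by
      rw [Finset.sum_pair (by norm_num : (0:ℕ) ≠ 1)]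
      simp [hf]
    rw [hs]
    refine hasSum_sum_of_ne_finset_zero ?_
    intro n hn
    simp only [Finset.mem_insert, Finset.mem_singleton, not_or] at hn
    have : f n = ∅ := by simp [hf, hn.1, hn.2]
    rw [this]
    exact aux_empty_form G hadd ψ
  exact h.unique h2

end AuxPOVM

/-- A POVM on the measurable space `Λ` acting on the complex Hilbert space `H`:
each measurable set gets a positive bounded operator, `G univ = I`, and `G` is
countably additive in the weak sense. -/
def IsPOVM {Λ : Type*} [MeasurableSpace Λ] {H : Type*} [NormedAddCommGroup H]
    [InnerProductSpace ℂ H] [CompleteSpace H] (G : Set Λ → (H →L[ℂ] H)) : Prop :=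
  (∀ A : Set Λ, MeasurableSet A → (G A).IsPositive) ∧
  G Set.univ = 1 ∧
  (∀ f : ℕ → Set Λ, (∀ n, MeasurableSet (f n)) →
    (Pairwise fun m n => Disjoint (f m) (f n)) →
    ∀ ψ : H, HasSum (fun n => ⟪ψ, G (f n) ψ⟫_ℂ) ⟪ψ, G (⋃ n, f n) ψ⟫_ℂ)

/-- Theorem 2 of the paper: for an empirically adequate, line complete ontological model
on a Hilbert space of dimension ≥ 2, there is no POVM `G` whose quadratic forms reproduce
the distributions `ρ^ψ` over the ontic space and such that every line projection `P_g`
arises as the weak `G`-integral of a `[0,1]`-valued measurable function. -/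
theorem stmt_5 {H : Type*} [NormedAddCommGroup H] [InnerProductSpace ℂ H]
    [CompleteSpace H] (hdim : 2 ≤ Module.rank ℂ H)
    {Λ : Type*} [MeasurableSpace Λ]
    (ρ : H → Measure Λ) (hρ : ∀ ψ : H, ‖ψ‖ = 1 → IsProbabilityMeasure (ρ ψ)) :
    ¬ ∃ G : Set Λ → (H →L[ℂ] H),
      IsPOVM G ∧
      -- G reproduces the probability measures ρ^ψ
      (∀ ψ : H, ‖ψ‖ = 1 → ∀ A : Set Λ, MeasurableSet A →
        ((ρ ψ) A).toReal = (⟪ψ, G A ψ⟫_ℂ).re) ∧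
      -- every line projection P_g is a weak G-integral of a [0,1]-valued function
      (∀ φ : H, ‖φ‖ = 1 → ∃ p : Λ → ℝ, Measurable p ∧ (∀ l, p l ∈ Set.Icc (0:ℝ) 1) ∧
        ∀ ψ : H, ‖ψ‖ = 1 → ∫ l, p l ∂(ρ ψ) = ‖⟪φ, ψ⟫_ℂ‖ ^ 2) := by
  rintro ⟨G, ⟨hpos, huniv, hadd⟩, hrep, hline⟩
  -- ### an orthonormal pair
  have hnt : Nontrivial H := by
    rw [← rank_pos_iff_nontrivial (R := ℂ)]
    calc (0 : Cardinal) < 2 := by norm_num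
      _ ≤ Module.rank ℂ H := hdim
  obtain ⟨x, hx⟩ := exists_ne (0 : H)
  set φ₁ : H := ((‖x‖⁻¹ : ℝ) : ℂ) • x with hφ₁def
  have hnx : ‖x‖ ≠ 0 := norm_ne_zero_iff.mpr hx
  have hφ₁ : ‖φ₁‖ = 1 := by
    rw [hφ₁def, norm_smul, Complex.norm_real, Real.norm_eq_abs,
      abs_of_nonneg (inv_nonneg.mpr (norm_nonneg x))]
    field_simp
  have hKne : (ℂ ∙ φ₁)ᗮ ≠ ⊥ := by
    intro hbot
    have htop : (ℂ ∙ φ₁) = ⊤ := Submodule.orthogonal_eq_bot_iff.mp hbot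
    have h1 : Module.rank ℂ H ≤ 1 := by
      rw [← rank_top ℂ H, ← htop]
      calc Module.rank ℂ (ℂ ∙ φ₁) ≤ Cardinal.mk ({φ₁} : Set H) := rank_span_le {φ₁}
        _ = 1 := Cardinal.mk_singleton φ₁
    have : (2 : Cardinal) ≤ 1 := le_trans hdim h1
    norm_num at this
  obtain ⟨y, hyK, hy0⟩ := Submodule.exists_mem_ne_zero_of_ne_bot hKne
  set φ₂ : H := ((‖y‖⁻¹ : ℝ) : ℂ) • y with hφ₂def
  have hny : ‖y‖ ≠ 0 := norm_ne_zero_iff.mpr hy0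
  have hφ₂ : ‖φ₂‖ = 1 := by
    rw [hφ₂def, norm_smul, Complex.norm_real, Real.norm_eq_abs,
      abs_of_nonneg (inv_nonneg.mpr (norm_nonneg y))]
    field_simp
  have hφ₂K : φ₂ ∈ (ℂ ∙ φ₁)ᗮ := Submodule.smul_mem _ _ hyK
  have o12 : ⟪φ₁, φ₂⟫_ℂ = 0 :=
    (Submodule.mem_orthogonal _ _).mp hφ₂K φ₁ (Submodule.mem_span_singleton_self φ₁)
  have o21 : ⟪φ₂, φ₁⟫_ℂ = 0 := by
    rw [← inner_conj_symm, o12, map_zero]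
  have i11 : ⟪φ₁, φ₁⟫_ℂ = 1 := by
    rw [inner_self_eq_norm_sq_to_K, hφ₁]; norm_num
  have i22 : ⟪φ₂, φ₂⟫_ℂ = 1 := by
    rw [inner_self_eq_norm_sq_to_K, hφ₂]; norm_num
  -- ### the superposition vectors
  set c : ℂ := (((Real.sqrt 2)⁻¹ : ℝ) : ℂ) with hcdef
  have hc2 : c * c = 1/2 := by
    rw [hcdef, ← Complex.ofReal_mul, ← mul_inv, Real.mul_self_sqrt (by norm_num : (0:ℝ) ≤ 2)]
    norm_num
  have hcconj : (starRingEnd ℂ) c = c := Complex.conj_ofReal _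
  set ψ₃ : H := c • (φ₁ + φ₂) with hψ₃def
  set ψ₄ : H := c • (φ₂ - φ₁) with hψ₄def
  have h33 : ⟪ψ₃, ψ₃⟫_ℂ = 1 := by
    rw [hψ₃def]
    simp only [inner_smul_left, inner_smul_right, inner_add_left, inner_add_right,
      i11, i22, o12, o21, hcconj]
    linear_combination 2 * hc2
  have h44 : ⟪ψ₄, ψ₄⟫_ℂ = 1 := by
    rw [hψ₄def]
    simp only [inner_smul_left, inner_smul_right, inner_sub_left, inner_sub_right,
      i11, i22, o12, o21, hcconj]
    linear_combination 2 * hc2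
  have h34 : ⟪ψ₃, ψ₄⟫_ℂ = 0 := by
    rw [hψ₃def, hψ₄def]
    simp only [inner_smul_left, inner_smul_right, inner_add_left, inner_sub_right,
      i11, i22, o12, o21, hcconj]
    ring
  have h13 : ⟪φ₁, ψ₃⟫_ℂ = c := by
    rw [hψ₃def]
    simp only [inner_smul_right, inner_add_right, i11, o12]
    ring
  have h3n : ‖ψ₃‖ = 1 := aux_norm_one h33
  have h4n : ‖ψ₄‖ = 1 := aux_norm_one h44
  -- ### probability instances
  haveI P1 : IsProbabilityMeasure (ρ φ₁) := hρ φ₁ hφ₁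
  haveI P2 : IsProbabilityMeasure (ρ φ₂) := hρ φ₂ hφ₂
  haveI P3 : IsProbabilityMeasure (ρ ψ₃) := hρ ψ₃ h3n
  haveI P4 : IsProbabilityMeasure (ρ ψ₄) := hρ ψ₄ h4n
  -- ### basic POVM facts
  have hform : ∀ (A : Set Λ), MeasurableSet A → ∀ z : H, 0 ≤ (⟪z, G A z⟫_ℂ).re := by
    intro A hA z
    have h := (hpos A hA).2 z
    rw [ContinuousLinearMap.reApplyInnerSelf_apply, RCLike.re_to_complex] at h
    have hcj : ⟪z, G A z⟫_ℂ = (starRingEnd ℂ) ⟪G A z, z⟫_ℂ := (inner_conj_symm _ _).symm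
    rw [hcj, Complex.conj_re]
    exact h
  have hsa : ∀ (A : Set Λ), MeasurableSet A → IsSelfAdjoint (G A) := fun A hA => (hpos A hA).isSelfAdjoint
  have hcompl : ∀ (A : Set Λ), MeasurableSet A → ∀ z : H,
      (⟪z, G A z⟫_ℂ).re + (⟪z, G Aᶜ z⟫_ℂ).re = (⟪z, z⟫_ℂ).re := by
    intro A hA z
    have h := aux_pair_form G hadd hA hA.compl disjoint_compl_right z
    rw [Set.union_compl_self, huniv] at h
    have h1 : ⟪z, (1 : H →L[ℂ] H) z⟫_ℂ = ⟪z, z⟫_ℂ := by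
      rw [ContinuousLinearMap.one_apply]
    rw [h1] at h
    have h2 := congrArg Complex.re h
    rw [Complex.add_re] at h2
    linarith [h2]
  have hmono : ∀ (A B : Set Λ), MeasurableSet A → MeasurableSet B → A ⊆ B → ∀ z : H,
      (⟪z, G A z⟫_ℂ).re ≤ (⟪z, G B z⟫_ℂ).re := by
    intro A B hA hB hABs z
    have h := aux_pair_form G hadd hA (hB.diff hA) disjoint_sdiff_self_right z
    rw [Set.union_diff_cancel hABs] at h
    have h2 := congrArg Complex.re h
    rw [Complex.add_re] at h2
    have h3 := hform (B \ A) (hB.diff hA) z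
    linarith [h2, h3]
  -- ### the functions associated to the lines through φ₁ and ψ₃
  obtain ⟨p₀, hp₀m, hp₀icc, hp₀int⟩ := hline φ₁ hφ₁
  obtain ⟨p₁, hp₁m, hp₁icc, hp₁int⟩ := hline ψ₃ h3n
  set F₀ : Set Λ := {l | p₀ l = 1} with hF₀def
  set F₁ : Set Λ := {l | p₁ l = 1} with hF₁def
  have hF₀ : MeasurableSet F₀ := hp₀m (measurableSet_singleton 1)
  have hF₁ : MeasurableSet F₁ := hp₁m (measurableSet_singleton 1)
  -- ### measure-theoretic facts
  have m1 : ρ φ₁ F₀ᶜ = 0 := aux_meas_one _ hp₀m hp₀icc (by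
    rw [hp₀int φ₁ hφ₁, i11]; norm_num)
  have m2 : ρ φ₂ F₀ = 0 := aux_meas_zero _ hp₀m hp₀icc (by
    rw [hp₀int φ₂ hφ₂, o12]; norm_num)
  have m3 : ρ ψ₃ F₁ = 1 := by
    have h := aux_meas_one (ρ ψ₃) hp₁m hp₁icc (by rw [hp₁int ψ₃ h3n, h33]; norm_num)
    exact (prob_compl_eq_zero_iff hF₁).mp h
  have m4 : ρ ψ₄ F₁ = 0 := aux_meas_zero _ hp₁m hp₁icc (by
    rw [hp₁int ψ₄ h4n, h34]; norm_num)
  -- ### quadratic-form values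
  have r20 : (⟪φ₂, G F₀ φ₂⟫_ℂ).re = 0 := by
    rw [← hrep φ₂ hφ₂ F₀ hF₀, m2]; simp
  have r41 : (⟪ψ₄, G F₁ ψ₄⟫_ℂ).re = 0 := by
    rw [← hrep ψ₄ h4n F₁ hF₁, m4]; simp
  have r31 : (⟪ψ₃, G F₁ ψ₃⟫_ℂ).re = 1 := by
    rw [← hrep ψ₃ h3n F₁ hF₁, m3]; simp
  -- ### G F₁ fixes ψ₃ and kills ψ₄
  have e1 : G F₁ ψ₃ = ψ₃ := by
    have hsa1 : IsSelfAdjoint ((1 : H →L[ℂ] H) - G F₁) :=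
      (IsSelfAdjoint.one (H →L[ℂ] H)).sub (hsa F₁ hF₁)
    have hpos1 : ∀ z : H, 0 ≤ (⟪z, ((1 : H →L[ℂ] H) - G F₁) z⟫_ℂ).re := by
      intro z
      have h1 := hcompl F₁ hF₁ z
      have h2 := hform F₁ᶜ hF₁.compl z
      have h3 : ⟪z, ((1 : H →L[ℂ] H) - G F₁) z⟫_ℂ = ⟪z, z⟫_ℂ - ⟪z, G F₁ z⟫_ℂ := by
        rw [ContinuousLinearMap.sub_apply, ContinuousLinearMap.one_apply, inner_sub_right]
      rw [h3, Complex.sub_re]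
      linarith [h1, h2]
    have hz : (⟪ψ₃, ((1 : H →L[ℂ] H) - G F₁) ψ₃⟫_ℂ).re = 0 := by
      have h3 : ⟪ψ₃, ((1 : H →L[ℂ] H) - G F₁) ψ₃⟫_ℂ = ⟪ψ₃, ψ₃⟫_ℂ - ⟪ψ₃, G F₁ ψ₃⟫_ℂ := by
        rw [ContinuousLinearMap.sub_apply, ContinuousLinearMap.one_apply, inner_sub_right]
      rw [h3, Complex.sub_re, r31, h33]
      norm_num
    have h0 := aux_pos_apply_eq_zero hsa1 hpos1 hz
    rw [ContinuousLinearMap.sub_apply, ContinuousLinearMap.one_apply, sub_eq_zero] at h0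
    exact h0.symm
  have e5 : G F₁ ψ₄ = 0 := aux_pos_apply_eq_zero (hsa F₁ hF₁) (hform F₁ hF₁) r41
  -- ### the intersection F₀ ∩ F₁ kills the whole two-dimensional subspace
  set F : Set Λ := F₀ ∩ F₁ with hFdef
  have hF : MeasurableSet F := hF₀.inter hF₁
  have rF2 : (⟪φ₂, G F φ₂⟫_ℂ).re = 0 :=
    le_antisymm (le_trans (hmono F F₀ hF hF₀ Set.inter_subset_left φ₂) (le_of_eq r20))
      (hform F hF φ₂)
  have rF4 : (⟪ψ₄, G F ψ₄⟫_ℂ).re = 0 :=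
    le_antisymm (le_trans (hmono F F₁ hF hF₁ Set.inter_subset_right ψ₄) (le_of_eq r41))
      (hform F hF ψ₄)
  have e2 : G F φ₂ = 0 := aux_pos_apply_eq_zero (hsa F hF) (hform F hF) rF2
  have e3 : G F ψ₄ = 0 := aux_pos_apply_eq_zero (hsa F hF) (hform F hF) rF4
  have hs2c : ((Real.sqrt 2 : ℝ) : ℂ) * c = 1 := by
    rw [hcdef, ← Complex.ofReal_mul,
      mul_inv_cancel₀ (Real.sqrt_ne_zero'.mpr (by norm_num : (0:ℝ) < 2))]
    norm_num
  have hφ₁eq : φ₁ = φ₂ - ((Real.sqrt 2 : ℝ) : ℂ) • ψ₄ := by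
    rw [hψ₄def, smul_smul, hs2c, one_smul]
    abel
  have e4 : G F φ₁ = 0 := by
    have h1 : G F (((Real.sqrt 2 : ℝ) : ℂ) • ψ₄) = ((Real.sqrt 2 : ℝ) : ℂ) • G F ψ₄ :=
      map_smul (G F) _ _
    calc G F φ₁ = G F φ₂ - G F (((Real.sqrt 2 : ℝ) : ℂ) • ψ₄) := by rw [hφ₁eq, map_sub]
      _ = 0 := by rw [h1, e2, e3, smul_zero, sub_zero]
  -- ### hence ρ^{φ₁}(F₀ ∩ F₁) = 0 and so ρ^{φ₁}(F₁) = 0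
  have rρF : ρ φ₁ F = 0 := by
    have h := hrep φ₁ hφ₁ F hF
    rw [e4, inner_zero_right] at h
    have h0 : (ρ φ₁ F).toReal = 0 := by rw [h]; simp
    have hne : ρ φ₁ F ≠ ⊤ := measure_ne_top _ _
    rcases (ENNReal.toReal_eq_zero_iff _).mp h0 with h' | h'
    · exact h'
    · exact absurd h' hne
  have rρF₁ : ρ φ₁ F₁ = 0 := by
    have hsub : F₁ ⊆ F ∪ F₀ᶜ := by
      intro l hl
      by_cases h0 : l ∈ F₀
      · exact Or.inl ⟨h0, hl⟩
      · exact Or.inr h0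
    have h := measure_mono (μ := ρ φ₁) hsub
    have h2 := measure_union_le (μ := ρ φ₁) F F₀ᶜ
    rw [rρF, m1] at h2
    simp only [add_zero] at h2
    exact le_antisymm (le_trans h h2) zero_le
  -- ### but the quadratic form of G F₁ at φ₁ equals 1/2 : contradiction
  have hφ₁eq2 : φ₁ = c • ψ₃ - c • ψ₄ := by
    rw [hψ₃def, hψ₄def, smul_smul, smul_smul, hc2]
    have h1 : (1/2 : ℂ) • (φ₁ + φ₂) - (1/2 : ℂ) • (φ₂ - φ₁) = ((1/2:ℂ) + (1/2:ℂ)) • φ₁ := by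
      rw [smul_add, smul_sub, add_smul]
      abel
    rw [h1]
    norm_num
  have hfinal := hrep φ₁ hφ₁ F₁ hF₁
  rw [rρF₁] at hfinal
  have hGφ₁ : G F₁ φ₁ = c • ψ₃ := by
    have h1 : G F₁ (c • ψ₃) = c • G F₁ ψ₃ := map_smul (G F₁) c ψ₃
    have h2 : G F₁ (c • ψ₄) = c • G F₁ ψ₄ := map_smul (G F₁) c ψ₄
    calc G F₁ φ₁ = G F₁ (c • ψ₃) - G F₁ (c • ψ₄) := by rw [hφ₁eq2, map_sub]
      _ = c • ψ₃ := by rw [h1, h2, e1, e5, smul_zero, sub_zero]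
  rw [hGφ₁] at hfinal
  have hval : ⟪φ₁, c • ψ₃⟫_ℂ = 1/2 := by
    rw [inner_smul_right, h13, hc2]
  rw [hval] at hfinal
  norm_num at hfinal
end

section
/- Let G be a POVM on (Λ, L) acting on a complex Hilbert space H, g a one-dimensional subspace with projection P_g, and p : Λ → [0,1] measurable with ∫_Λ p(λ) G(dλ) = P_g (weakly). Let Λ_g = {λ : p(λ) > 0}. Then for every measurable A ⊆ Λ_g, the operator G(A) is a non-negative real multiple of P_g; in particular 0 ≤ G(A) ≤ P_g. -/
open scoped InnerProductSpace
open MeasureTheory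

section Aux
set_option linter.unusedSectionVars false
set_option linter.unusedVariables false
variable {H : Type*} [NormedAddCommGroup H] [InnerProductSpace ℂ H] [CompleteSpace H]

lemma aux_zero {T : H →L[ℂ] H} (hT : T.IsPositive) {ψ : H} (h : (⟪ψ, T ψ⟫_ℂ).re = 0) :
    T ψ = 0 := by
  have hsym := hT.1
  set a : ℝ := ‖T ψ‖ ^ 2 with ha
  set C : ℝ := (⟪T (T ψ), T ψ⟫_ℂ).re with hC
  have hC0 : 0 ≤ C := hT.2 (T ψ)
  have h0 : (⟪T ψ, ψ⟫_ℂ).re = 0 := by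
    rw [← inner_conj_symm, Complex.conj_re]; exact h
  have hnn : (⟪T ψ, T ψ⟫_ℂ).re = a :=
    by rw [ha]; exact inner_self_eq_norm_sq (𝕜 := ℂ) (T ψ)
  have him : (⟪T ψ, T ψ⟫_ℂ).im = 0 := inner_self_im (𝕜 := ℂ) (T ψ)
  have key : ∀ t : ℝ, 0 ≤ 2 * t * a + t ^ 2 * C := by
    intro t
    have := hT.2 (ψ + (t : ℂ) • T ψ)
    rw [ContinuousLinearMap.reApplyInnerSelf_apply] at this
    have hTT : ⟪T (T ψ), ψ⟫_ℂ = ⟪T ψ, T ψ⟫_ℂ := hsym (T ψ) ψ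
    simp only [map_add, _root_.map_smul, inner_add_left, inner_add_right, inner_smul_left,
      inner_smul_right, hTT, RCLike.re_to_complex, Complex.add_re, Complex.mul_re,
      Complex.conj_re, Complex.conj_im, Complex.ofReal_re, Complex.ofReal_im,
      neg_zero, zero_mul, mul_zero, sub_zero, add_zero, zero_add, h0, hnn, him,
      ← hC] at this
    nlinarith [this]
  have ha0 : a ≤ 0 := by
    by_contra hcon
    push_neg at hcon
    rcases eq_or_lt_of_le hC0 with hC' | hC'
    · have := key (-1); nlinarith
    · set t : ℝ := a / C with htdef
      have htpos : 0 < t := div_pos hcon hC'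
      have htC : t * C = a := div_mul_cancel₀ a (ne_of_gt hC')
      have := key (-t)
      nlinarith [mul_pos htpos hcon]
  have : ‖T ψ‖ = 0 := by nlinarith [sq_nonneg ‖T ψ‖, norm_nonneg (T ψ)]
  simpa using this

lemma aux_real_smul_inner_left (c : ℝ) (u v : H) : ⟪c • u, v⟫_ℂ = c • ⟪u, v⟫_ℂ := by
  rw [RCLike.real_smul_eq_coe_smul (K := ℂ) c u, inner_smul_real_left]

lemma aux_real_smul_inner_right (c : ℝ) (u v : H) : ⟪u, c • v⟫_ℂ = c • ⟪u, v⟫_ℂ := by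
  rw [RCLike.real_smul_eq_coe_smul (K := ℂ) c v, inner_smul_real_right]

lemma aux_proj_pos {φ : H} (hφ : ‖φ‖ = 1) (P : H →L[ℂ] H)
    (hP : ∀ x, P x = ⟪φ, x⟫_ℂ • φ) : P.IsPositive := by
  constructor
  · intro x y
    simp only [ContinuousLinearMap.coe_coe, hP, inner_smul_left, inner_smul_right]
    rw [← inner_conj_symm x φ]
    ring
  · intro x
    rw [ContinuousLinearMap.reApplyInnerSelf_apply, hP, inner_smul_left,
      RCLike.conj_mul]
    norm_cast; positivity

lemma aux_smul_pos {T : H →L[ℂ] H} (hT : T.IsPositive) {c : ℝ} (hc : 0 ≤ c) :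
    (c • T).IsPositive := by
  have hs := hT.1
  constructor
  · intro x y
    simp only [ContinuousLinearMap.coe_coe, ContinuousLinearMap.smul_apply,
      aux_real_smul_inner_left, aux_real_smul_inner_right]
    rw [show ⟪T x, y⟫_ℂ = ⟪x, T y⟫_ℂ from hs x y]
  · intro x
    rw [ContinuousLinearMap.reApplyInnerSelf_apply, ContinuousLinearMap.smul_apply,
      aux_real_smul_inner_left]
    have := hT.2 x
    rw [ContinuousLinearMap.reApplyInnerSelf_apply] at this
    simpa [Complex.real_smul] using mul_nonneg hc this

end Aux

/-- If the weak `G`-integral of the `[0,1]`-valued function `p` is the projection `P` onto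
the line spanned by the unit vector `φ`, then for every measurable `A ⊆ {p > 0}`, `G A` is a
nonnegative multiple of `P`; in particular `0 ≤ G A ≤ P`. -/
theorem stmt_7 {H : Type*} [NormedAddCommGroup H] [InnerProductSpace ℂ H]
    [CompleteSpace H]
    {Λ : Type*} [MeasurableSpace Λ]
    (G : Set Λ → (H →L[ℂ] H)) (hG : IsPOVM G)
    (μ : H → Measure Λ)
    (hμ : ∀ ψ : H, ∀ A : Set Λ, MeasurableSet A → ((μ ψ) A).toReal = (⟪ψ, G A ψ⟫_ℂ).re)
    (φ : H) (hφ : ‖φ‖ = 1)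
    (P : H →L[ℂ] H) (hP : ∀ x, P x = ⟪φ, x⟫_ℂ • φ)
    (p : Λ → ℝ) (hpm : Measurable p) (hp01 : ∀ l, p l ∈ Set.Icc (0:ℝ) 1)
    (hint : ∀ ψ : H, ∫ l, p l ∂(μ ψ) = (⟪ψ, P ψ⟫_ℂ).re) :
    ∀ A : Set Λ, MeasurableSet A → A ⊆ {l | 0 < p l} →
      (∃ c : ℝ, 0 ≤ c ∧ G A = c • P) ∧ (G A).IsPositive ∧ (P - G A).IsPositive := by
  obtain ⟨hpos, huniv, -⟩ := hG
  intro A hA hAp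
  have hGA := hpos A hA
  have hsymA := hGA.1
  have hφφ : ⟪φ, φ⟫_ℂ = 1 := by
    rw [inner_self_eq_norm_sq_to_K, hφ]; norm_num
  -- finiteness of μ ψ for ψ ≠ 0
  have hfin : ∀ ψ : H, ψ ≠ 0 → IsFiniteMeasure (μ ψ) := by
    intro ψ hψ
    have h1 : ((μ ψ) Set.univ).toReal = ‖ψ‖ ^ 2 := by
      rw [hμ ψ _ MeasurableSet.univ, huniv]
      simpa using inner_self_eq_norm_sq (𝕜 := ℂ) ψ
    constructor
    rw [lt_top_iff_ne_top]
    intro htop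
    rw [htop] at h1
    simp only [ENNReal.toReal_top] at h1
    exact hψ (by simpa using (sq_eq_zero_iff.mp h1.symm))
  -- key: G A annihilates the orthogonal complement of φ
  have key : ∀ ψ : H, ⟪φ, ψ⟫_ℂ = 0 → G A ψ = 0 := by
    intro ψ hψφ
    rcases eq_or_ne ψ 0 with rfl | hψ0
    · simp
    haveI := hfin ψ hψ0
    have hPψ : (⟪ψ, P ψ⟫_ℂ).re = 0 := by
      rw [hP ψ, inner_smul_right, hψφ, zero_mul]; simp
    have hint0 : ∫ l, p l ∂(μ ψ) = 0 := by rw [hint ψ, hPψ]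
    have hpint : Integrable p (μ ψ) := by
      apply Integrable.mono' (integrable_const (1 : ℝ)) hpm.aestronglyMeasurable
      filter_upwards with l
      rw [Real.norm_eq_abs, abs_of_nonneg (hp01 l).1]; exact (hp01 l).2
    have hae : ∀ᵐ l ∂(μ ψ), p l = 0 := by
      have := (integral_eq_zero_iff_of_nonneg (fun l => (hp01 l).1) hpint).mp hint0
      filter_upwards [this] with l hl using hl
    have hA0 : μ ψ A = 0 := by
      apply measure_mono_null (t := {l | ¬ p l = 0})
      · intro l hl
        exact ne_of_gt (hAp hl)
      · exact hae
    have hre : (⟪ψ, G A ψ⟫_ℂ).re = 0 := by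
      rw [← hμ ψ A hA, hA0]; simp
    exact aux_zero (hpos A hA) hre
  -- G A φ is a multiple of φ
  set cC : ℂ := ⟪φ, G A φ⟫_ℂ with hcC
  have hGφ : G A φ = cC • φ := by
    set w : H := G A φ - cC • φ with hw
    have hφw : ⟪φ, w⟫_ℂ = 0 := by
      rw [hw, inner_sub_right, inner_smul_right, hφφ, mul_one, ← hcC, sub_self]
    have hGw : G A w = 0 := key w hφw
    have hwφ : ⟪w, φ⟫_ℂ = 0 := by
      rw [← inner_conj_symm, hφw, map_zero]
    have h1 : ⟪w, G A φ⟫_ℂ = 0 := by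
      have h2 : ⟪G A w, φ⟫_ℂ = ⟪w, G A φ⟫_ℂ := hsymA w φ
      rw [← h2, hGw, inner_zero_left]
    have h3 : ⟪w, w⟫_ℂ = 0 := by
      have : ⟪w, w⟫_ℂ = ⟪w, G A φ⟫_ℂ - cC * ⟪w, φ⟫_ℂ := by
        rw [hw, inner_sub_right, inner_smul_right]
      rw [this, h1, hwφ, mul_zero, sub_zero]
    have hw0 : w = 0 := inner_self_eq_zero.mp h3
    have := sub_eq_zero.mp (hw ▸ hw0 : G A φ - cC • φ = 0)
    exact this
  set c : ℝ := cC.re with hc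
  have hcreal : cC = (c : ℂ) := by
    have hconj : (starRingEnd ℂ) cC = cC := by
      rw [hcC, inner_conj_symm]
      exact hsymA φ φ
    exact ((Complex.conj_eq_iff_re).mp hconj).symm
  have hcnonneg : 0 ≤ c := by
    have := hGA.2 φ
    rw [ContinuousLinearMap.reApplyInnerSelf_apply, ← inner_conj_symm, ← hcC,
      RCLike.re_to_complex, Complex.conj_re] at this
    exact this
  -- G A = c • P
  have hGAeq : G A = c • P := by
    ext x
    have hperp : ⟪φ, x - ⟪φ, x⟫_ℂ • φ⟫_ℂ = 0 := by
      rw [inner_sub_right, inner_smul_right, hφφ, mul_one, sub_self]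
    have hxdecomp : G A x = ⟪φ, x⟫_ℂ • G A φ := by
      have : x = ⟪φ, x⟫_ℂ • φ + (x - ⟪φ, x⟫_ℂ • φ) := by abel
      conv_lhs => rw [this]
      rw [map_add, _root_.map_smul, key _ hperp, add_zero]
    rw [hxdecomp, hGφ, hcreal, ContinuousLinearMap.smul_apply, hP, smul_smul,
      RCLike.real_smul_eq_coe_smul (K := ℂ) c, smul_smul, mul_comm]
    rfl
  -- c ≤ 1
  have hφ0 : φ ≠ 0 := by
    intro h; rw [h, norm_zero] at hφ; exact one_ne_zero hφ.symm
  haveI := hfin φ hφ0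
  have hcA : ((μ φ) A).toReal = c := by
    rw [hμ φ A hA]
  have huv : ((μ φ) Set.univ).toReal = 1 := by
    rw [hμ φ _ MeasurableSet.univ, huniv]
    simp [hφφ, hφ]
  have hc1 : c ≤ 1 := by
    rw [← hcA, ← huv]
    exact ENNReal.toReal_mono (measure_ne_top _ _) (measure_mono (Set.subset_univ A))
  have hPpos : P.IsPositive := aux_proj_pos hφ P hP
  refine ⟨⟨c, hcnonneg, hGAeq⟩, hGA, ?_⟩
  have : P - G A = (1 - c) • P := by
    rw [hGAeq, sub_smul, one_smul]
  rw [this]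
  exact aux_smul_pos hPpos (by linarith)
end
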